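/- For every integer n ≥ 3, the sequence z_n = (s_n − γ) − (1/(12n³) + 11/(120n⁴)) is strictly decreasing, i.e. z_{n+1} < z_n for all n ≥ 3, where s_n = (∑_{k=1}^{n−2} 1/k) + 13/(12(n−1)) + 5/(12n) − ln n. -/

import Mathlib

/-!
Up to the harmonic sum, `z n` is a rational function of `n` minus `log n`, so
`z (n + 1) - z n = 1 / (n - 1) + r (n + 1) - r n - log (1 + 1 / n)` for an explicit rational `r`.
Bounding `log (1 + 1 / n)` from below by its Taylor polynomial of degree 7 in `1 / n` minus the
geometric tail bound leaves a rational function whose numerator is a sextic with only positive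
coefficients in powers of `n - 3`.
-/

open Real Finset

noncomputable def s (n : ℕ) : ℝ :=
  (∑ k ∈ Finset.Icc 1 (n - 2), (1 : ℝ) / k) + 13 / (12 * ((n : ℝ) - 1)) + 5 / (12 * n)
    - Real.log n

noncomputable def z (n : ℕ) : ℝ :=
  (s n - Real.eulerMascheroniConstant)
    - (1 / (12 * (n : ℝ) ^ 3) + 11 / (120 * (n : ℝ) ^ 4))

theorem sum_range_sub_le_log_one_add {y : ℝ} (hy₀ : 0 ≤ y) (hy₁ : y < 1) (N : ℕ) :
    ∑ i ∈ range N, (-1) ^ i * y ^ (i + 1) / (i + 1) - y ^ (N + 1) / (1 - y) ≤ log (1 + y) := by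
  have h := abs_log_sub_add_sum_range_le (x := -y) (by rwa [abs_neg, abs_of_nonneg hy₀]) N
  rw [abs_neg, abs_of_nonneg hy₀, sub_neg_eq_add] at h
  have hsum : ∑ i ∈ range N, (-y) ^ (i + 1) / (i + 1)
      = -∑ i ∈ range N, (-1) ^ i * y ^ (i + 1) / (i + 1) := by
    rw [← sum_neg_distrib]
    exact sum_congr rfl fun i _ => by ring
  linarith [(abs_le.mp h).1]

noncomputable def zRational (x : ℝ) : ℝ :=
  13 / (12 * (x - 1)) + 5 / (12 * x) - (1 / (12 * x ^ 3) + 11 / (120 * x ^ 4))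

theorem z_eq_sum_add_zRational (n : ℕ) :
    z n = (∑ k ∈ Icc 1 (n - 2), (1 : ℝ) / k) + zRational n - log n - eulerMascheroniConstant := by
  unfold z s zRational
  ring

theorem z_succ_sub_z {n : ℕ} (hn : 2 ≤ n) :
    z (n + 1) - z n = 1 / (n - 1) + zRational (n + 1) - zRational n - log (1 + 1 / n) := by
  have hsum : ∑ k ∈ Icc 1 (n + 1 - 2), (1 : ℝ) / k
      = ∑ k ∈ Icc 1 (n - 2), (1 : ℝ) / k + 1 / (n - 1) := by
    rw [show n + 1 - 2 = n - 2 + 1 by omega, sum_Icc_succ_top (by omega),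
      show n - 2 + 1 = n - 1 by omega, Nat.cast_sub (by omega : 1 ≤ n), Nat.cast_one]
  have hlog : log (1 + 1 / n) = log (n + 1) - log n := by
    have hn₀ : (n : ℝ) ≠ 0 := by positivity
    rw [← log_div (by positivity) hn₀, one_add_div hn₀, add_comm]
  rw [z_eq_sum_add_zRational, z_eq_sum_add_zRational, hsum, hlog]
  push_cast
  ring

theorem one_div_sub_one_add_zRational_succ_sub_lt_log {x : ℝ} (hx : 3 ≤ x) :
    1 / (x - 1) + zRational (x + 1) - zRational x < log (1 + 1 / x) := by
  have hx₀ : 0 < x := by linarith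
  have hx₁ : 0 < x - 1 := by linarith
  have hnum : 0 < 150150 * x ^ 6 + 171600 * x ^ 5 - 190905 * x ^ 4 - 1311453 * x ^ 3
      - 2157012 * x ^ 2 - 1535820 * x - 411840 := by
    obtain ⟨t, ht, rfl⟩ : ∃ t ≥ 0, x = 3 + t := ⟨x - 3, by linarith, by ring⟩
    ring_nf
    positivity
  have hdiff : ∑ i ∈ range 7, (-1) ^ i * (1 / x) ^ (i + 1) / (i + 1)
        - (1 / x) ^ (7 + 1) / (1 - 1 / x) - (1 / (x - 1) + zRational (x + 1) - zRational x)
      = (150150 * x ^ 6 + 171600 * x ^ 5 - 190905 * x ^ 4 - 1311453 * x ^ 3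
          - 2157012 * x ^ 2 - 1535820 * x - 411840) / (360360 * x ^ 7 * (x - 1) * (x + 1) ^ 4) := by
    simp only [sum_range_succ, sum_range_zero, zRational, div_pow, one_pow,
      one_sub_div hx₀.ne', add_sub_cancel_right]
    field_simp
    ring
  calc 1 / (x - 1) + zRational (x + 1) - zRational x
      < ∑ i ∈ range 7, (-1) ^ i * (1 / x) ^ (i + 1) / (i + 1) - (1 / x) ^ (7 + 1) / (1 - 1 / x) := by
        rw [← sub_pos, hdiff]
        exact div_pos hnum (by positivity)
    _ ≤ log (1 + 1 / x) :=
        sum_range_sub_le_log_one_add (by positivity) ((div_lt_one hx₀).mpr (by linarith)) 7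

theorem z_strict_decreasing (n : ℕ) (hn : 3 ≤ n) : z (n + 1) < z n := by
  have hstep := one_div_sub_one_add_zRational_succ_sub_lt_log (x := n) (by exact_mod_cast hn)
  have hdiff := z_succ_sub_z (n := n) (by omega)
  linarith
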